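/- The function f(x) = x² (1−x²) K(x) K(√(1−x²)) is increasing on (0, 1/√2] and decreasing on [1/√2, 1), where K is the complete elliptic integral of the first kind; in particular its maximum on (0,1) is (1/4)K(1/√2)². -/

import Mathlib

/-!
Put `r = x²`, `𝒦(r) = (2/π) K(√r)` and `ℰ(r) = (2/π) E(√r)`. Then the function is
`(π/2)² F(r)` with `F(r) = r (1 - r) 𝒦(r) 𝒦(1 - r)`, which is symmetric under `r ↦ 1 - r`, so it is
enough that `F` increases on `(0, 1/2]`. Legendre's formula `2 r (1 - r) 𝒦' = ℰ - (1 - r) 𝒦` gives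
`2 F' = (1 - 2r) 𝒦(r) 𝒦(1 - r) + ℰ(r) 𝒦(1 - r) - ℰ(1 - r) 𝒦(r)`, and for `r ≤ 1/2` every part is
nonnegative because `𝒦` increases while `ℰ` decreases and stays positive. Legendre's formula itself
is an identity between the power series of `𝒦` and `ℰ`.
-/

/-- The rising factorial (Pochhammer symbol) `(a)ₙ = a(a+1)⋯(a+n−1)`. -/
def ascFac (a : ℝ) : ℕ → ℝ
  | 0 => 1
  | n + 1 => ascFac a n * (a + n)

/-- The Gaussian hypergeometric function `₂F₁(a,b;c;x) = Σ (a)ₙ(b)ₙ/((c)ₙ n!) xⁿ`. -/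
noncomputable def hyperF (a b c x : ℝ) : ℝ :=
  ∑' n : ℕ, ascFac a n * ascFac b n / (ascFac c n * n.factorial) * x ^ n

/-- The complete elliptic integral of the first kind,
`K(x) = (π/2)·₂F₁(1/2,1/2;1;x²)`. -/
noncomputable def ellipticK (x : ℝ) : ℝ := Real.pi / 2 * hyperF (1/2) (1/2) 1 (x ^ 2)

open Real Set Filter Topology

section PowerSeries

variable {a : ℕ → ℝ} {C u : ℝ}

lemma HasSum.of_nat_succ {G : Type*} [AddCommGroup G] [TopologicalSpace G]
    [IsTopologicalAddGroup G] {f : ℕ → G} {s : G} (h : HasSum (fun n => f (n + 1)) (s - f 0)) :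
    HasSum f s :=
  (hasSum_nat_add_iff' 1).mp (by rwa [Finset.sum_range_one])

lemma summable_mul_pow_of_abs_le (ha : ∀ n, |a n| ≤ C) (hu : |u| < 1) :
    Summable fun n => a n * u ^ n := by
  refine .of_norm_bounded ((summable_geometric_of_lt_one (abs_nonneg u) hu).mul_left C)
    fun n => ?_
  rw [norm_mul, norm_pow, Real.norm_eq_abs, Real.norm_eq_abs]
  exact mul_le_mul_of_nonneg_right (ha n) (by positivity)

lemma summable_succ_mul_pow {r : ℝ} (hr : |r| < 1) :
    Summable fun n : ℕ => ((n : ℝ) + 1) * r ^ n := by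
  have h := (summable_pow_mul_geometric_of_norm_lt_one 1 (by simpa using hr)).add
    (summable_geometric_of_abs_lt_one hr)
  simpa [add_mul] using h

lemma summable_succ_mul_mul_pow (ha : ∀ n, |a n| ≤ C) (hu : |u| < 1) :
    Summable fun n : ℕ => (n + 1) * a (n + 1) * u ^ n := by
  refine .of_norm_bounded ((summable_succ_mul_pow (r := |u|) (by rwa [abs_abs])).mul_left C)
    fun n => ?_
  rw [Real.norm_eq_abs, abs_mul, abs_mul, abs_pow,
    abs_of_nonneg (by positivity : (0 : ℝ) ≤ n + 1)]
  calc (n + 1) * |a (n + 1)| * |u| ^ n ≤ (n + 1) * C * |u| ^ n := by gcongr; exact ha _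
    _ = C * ((n + 1) * |u| ^ n) := by ring

lemma hasDerivAt_tsum_mul_pow (ha : ∀ n, |a n| ≤ C) (hu : |u| < 1) :
    HasDerivAt (fun y => ∑' n, a n * y ^ n) (∑' n, (n + 1) * a (n + 1) * u ^ n) u := by
  obtain ⟨r, hur, hr1⟩ := exists_between hu
  have hr : |r| < 1 := by rwa [abs_of_nonneg ((abs_nonneg u).trans hur.le)]
  have hu_mem : u ∈ Ioo (-r) r := abs_lt.mp hur
  have hshift : HasDerivAt (fun y => ∑' n, a (n + 1) * y ^ (n + 1))
      (∑' n, (n + 1) * a (n + 1) * u ^ n) u := by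
    refine hasDerivAt_tsum_of_isPreconnected (g := fun n y => a (n + 1) * y ^ (n + 1))
      (g' := fun n y => (n + 1) * a (n + 1) * y ^ n) ((summable_succ_mul_pow hr).mul_left C)
      isOpen_Ioo (convex_Ioo (-r) r : Convex ℝ (Ioo (-r) r)).isPreconnected
      (fun n y _ => ?_) (fun n y hy => ?_) hu_mem ?_ hu_mem
    · exact ((hasDerivAt_pow (n + 1) y).const_mul (a (n + 1))).congr_deriv (by
        rw [Nat.add_sub_cancel]; push_cast; ring)
    · rw [Real.norm_eq_abs, abs_mul, abs_mul, abs_pow,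
        abs_of_nonneg (by positivity : (0 : ℝ) ≤ n + 1)]
      have hC : 0 ≤ C := (abs_nonneg _).trans (ha 0)
      have hyr : |y| ^ n ≤ r ^ n := pow_le_pow_left₀ (abs_nonneg y) (abs_lt.mpr hy).le n
      calc (n + 1) * |a (n + 1)| * |y| ^ n ≤ (n + 1) * C * r ^ n := by gcongr; exact ha _
        _ = C * ((n + 1) * r ^ n) := by ring
    · exact (summable_nat_add_iff 1).mpr (summable_mul_pow_of_abs_le ha hu)
  have heq : (fun y => ∑' n, a n * y ^ n) =ᶠ[𝓝 u]
      fun y => a 0 + ∑' n, a (n + 1) * y ^ (n + 1) := by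
    filter_upwards [(isOpen_lt continuous_abs continuous_const).mem_nhds hu] with y hy
    simpa using (summable_mul_pow_of_abs_le ha hy).tsum_eq_zero_add
  exact (hshift.const_add (a 0)).congr_of_eventuallyEq heq

end PowerSeries

lemma ascFac_pos {a : ℝ} (ha : 0 < a) : ∀ n, 0 < ascFac a n
  | 0 => one_pos
  | n + 1 => mul_pos (ascFac_pos ha n) (by positivity)

lemma ascFac_one : ∀ n : ℕ, ascFac 1 n = n.factorial
  | 0 => by simp [ascFac]
  | n + 1 => by
      rw [ascFac, ascFac_one n, Nat.factorial_succ]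
      push_cast
      ring

noncomputable def kCoeff (n : ℕ) : ℝ := (ascFac (1 / 2) n / n.factorial) ^ 2

-- `(-1/2)ₙ = -(1/2)ₙ / (2n - 1)`, so these are the coefficients of `₂F₁(-1/2, 1/2; 1; ·)`.
noncomputable def eCoeff (n : ℕ) : ℝ := -kCoeff n / (2 * n - 1)

lemma kCoeff_zero : kCoeff 0 = 1 := by simp [kCoeff, ascFac]

lemma kCoeff_succ (n : ℕ) :
    kCoeff (n + 1) = kCoeff n * ((2 * n + 1) / (2 * n + 2)) ^ 2 := by
  simp only [kCoeff, ascFac, Nat.factorial_succ]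
  push_cast
  field_simp
  ring

lemma kCoeff_pos (n : ℕ) : 0 < kCoeff n :=
  pow_pos (div_pos (ascFac_pos one_half_pos n) (by positivity)) 2

lemma abs_kCoeff_le_one (n : ℕ) : |kCoeff n| ≤ 1 := by
  rw [abs_of_pos (kCoeff_pos n)]
  have hanti : Antitone kCoeff := antitone_nat_of_succ_le fun n => by
    rw [kCoeff_succ]
    refine mul_le_of_le_one_right (kCoeff_pos n).le (pow_le_one₀ (by positivity) ?_)
    rw [div_le_one (by positivity)]
    linarith
  simpa [kCoeff_zero] using hanti (Nat.zero_le n)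

lemma abs_eCoeff_le_one (n : ℕ) : |eCoeff n| ≤ 1 := by
  have h : 1 ≤ |(2 * n - 1 : ℝ)| := by
    rcases n with _ | n
    · norm_num
    · rw [le_abs]; left; push_cast; linarith
  rw [eCoeff, abs_div, abs_neg, div_le_one (by positivity)]
  exact (abs_kCoeff_le_one n).trans h

lemma eCoeff_zero : eCoeff 0 = 1 := by simp [eCoeff, kCoeff_zero]

lemma eCoeff_nonpos {n : ℕ} (hn : n ≠ 0) : eCoeff n ≤ 0 := by
  have : (1 : ℝ) ≤ n := by exact_mod_cast Nat.one_le_iff_ne_zero.mpr hn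
  exact div_nonpos_of_nonpos_of_nonneg (neg_nonpos.mpr (kCoeff_pos n).le) (by linarith)

lemma eCoeff_succ (n : ℕ) :
    eCoeff (n + 1) = (2 * (n + 1) + 1) * kCoeff (n + 1) - (2 * n + 1) * kCoeff n := by
  rw [eCoeff, kCoeff_succ, Nat.cast_succ, show 2 * ((n : ℝ) + 1) - 1 = 2 * n + 1 by ring]
  field_simp
  ring

section EllipticSeries

variable {r : ℝ}

/-- `kSq r = (2/π)·K(√r)` and `eSq r = (2/π)·E(√r)`, with `E` the complete elliptic integral of
the second kind: the Legendre pair as power series in `r = k²`. -/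
noncomputable def kSq (r : ℝ) : ℝ := ∑' n, kCoeff n * r ^ n

noncomputable def eSq (r : ℝ) : ℝ := ∑' n, eCoeff n * r ^ n

lemma hasSum_kSq (hr : |r| < 1) : HasSum (fun n => kCoeff n * r ^ n) (kSq r) :=
  (summable_mul_pow_of_abs_le abs_kCoeff_le_one hr).hasSum

lemma hasSum_eSq (hr : |r| < 1) : HasSum (fun n => eCoeff n * r ^ n) (eSq r) :=
  (summable_mul_pow_of_abs_le abs_eCoeff_le_one hr).hasSum

lemma eSq_eq (hr : |r| < 1) :
    eSq r = (1 - r) * (kSq r + 2 * r * ∑' n : ℕ, (n + 1) * kCoeff (n + 1) * r ^ n) := by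
  set D := ∑' n : ℕ, (n + 1) * kCoeff (n + 1) * r ^ n
  have hD : HasSum (fun n : ℕ => (n + 1) * kCoeff (n + 1) * r ^ n) D :=
    (summable_succ_mul_mul_pow abs_kCoeff_le_one hr).hasSum
  have hnD : HasSum (fun n : ℕ => n * kCoeff n * r ^ n) (r * D) := by
    refine .of_nat_succ ?_
    rw [Nat.cast_zero, zero_mul, zero_mul, sub_zero]
    exact (hD.mul_left r).congr_fun fun n => by push_cast; ring
  set S := kSq r + 2 * r * D
  have hβ : HasSum (fun n : ℕ => (2 * n + 1) * kCoeff n * r ^ n) S := by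
    have h := (hasSum_kSq hr).add (hnD.mul_left 2)
    rw [show kSq r + 2 * (r * D) = S by ring] at h
    exact h.congr_fun fun n => by ring
  -- `eCoeff` is the first difference of `(2n+1)·kCoeff n`, so `∑ eCoeff n rⁿ = (1 - r)·S`.
  have hE : HasSum (fun n => eCoeff n * r ^ n) ((1 - r) * S) := by
    refine .of_nat_succ ?_
    rw [eCoeff_zero, show (1 - r) * S - 1 * r ^ 0 = (S - 1) - r * S by ring]
    have hβ₁ := (hasSum_nat_add_iff' 1).mpr hβ
    rw [Finset.sum_range_one, show (2 * ((0 : ℕ) : ℝ) + 1) * kCoeff 0 * r ^ 0 = 1 by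
      simp [kCoeff_zero]] at hβ₁
    exact (hβ₁.sub (hβ.mul_left r)).congr_fun fun n => by rw [eCoeff_succ]; push_cast; ring
  exact (hasSum_eSq hr).unique hE

-- Legendre's formula for `dK/dk`, in the variable `r = k²`.
lemma hasDerivAt_kSq (h0 : 0 < r) (h1 : r < 1) :
    HasDerivAt kSq ((eSq r - (1 - r) * kSq r) / (2 * r * (1 - r))) r := by
  have hr : |r| < 1 := by rwa [abs_of_pos h0]
  refine (hasDerivAt_tsum_mul_pow abs_kCoeff_le_one hr).congr_deriv ?_
  rw [eSq_eq hr]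
  have : 1 - r ≠ 0 := by linarith
  field_simp
  ring

lemma one_le_kSq (h0 : 0 ≤ r) (h1 : r < 1) : 1 ≤ kSq r := by
  have := le_hasSum (hasSum_kSq (by rwa [abs_of_nonneg h0])) 0
    fun n _ => mul_nonneg (kCoeff_pos n).le (pow_nonneg h0 n)
  simpa [kCoeff_zero] using this

lemma eSq_pos (h0 : 0 ≤ r) (h1 : r < 1) : 0 < eSq r := by
  rw [eSq_eq (by rwa [abs_of_nonneg h0])]
  have := one_le_kSq h0 h1
  have : 0 ≤ ∑' n : ℕ, (n + 1) * kCoeff (n + 1) * r ^ n :=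
    tsum_nonneg fun n => by have := kCoeff_pos (n + 1); positivity
  have : 0 < 1 - r := by linarith
  positivity

lemma kSq_monotoneOn : MonotoneOn kSq (Ico 0 1) := by
  intro r hr s hs hrs
  refine hasSum_le (fun n => ?_) (hasSum_kSq ?_) (hasSum_kSq ?_)
  · exact mul_le_mul_of_nonneg_left (pow_le_pow_left₀ hr.1 hrs n) (kCoeff_pos n).le
  · rw [abs_of_nonneg hr.1]; exact hr.2
  · rw [abs_of_nonneg hs.1]; exact hs.2

lemma eSq_antitoneOn : AntitoneOn eSq (Ico 0 1) := by
  intro r hr s hs hrs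
  refine hasSum_le (fun n => ?_) (hasSum_eSq ?_) (hasSum_eSq ?_)
  · rcases eq_or_ne n 0 with rfl | hn
    · simp
    · exact mul_le_mul_of_nonpos_left (pow_le_pow_left₀ hr.1 hrs n) (eCoeff_nonpos hn)
  · rw [abs_of_nonneg hs.1]; exact hs.2
  · rw [abs_of_nonneg hr.1]; exact hr.2

end EllipticSeries

section KProduct

variable {r : ℝ}

noncomputable def kProduct (r : ℝ) : ℝ := r * (1 - r) * kSq r * kSq (1 - r)

lemma kProduct_one_sub (r : ℝ) : kProduct (1 - r) = kProduct r := by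
  simp only [kProduct, sub_sub_cancel]
  ring

lemma hasDerivAt_kProduct (h0 : 0 < r) (h1 : r < 1) :
    HasDerivAt kProduct (((1 - 2 * r) * kSq r * kSq (1 - r) +
      (eSq r * kSq (1 - r) - eSq (1 - r) * kSq r)) / 2) r := by
  have hK := hasDerivAt_kSq h0 h1
  have hKc : HasDerivAt (fun y => kSq (1 - y))
      (-((eSq (1 - r) - r * kSq (1 - r)) / (2 * (1 - r) * r))) r := by
    have := hasDerivAt_kSq (r := 1 - r) (by linarith) (by linarith)
    rw [sub_sub_cancel] at this
    exact this.comp_const_sub 1 r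
  have hpoly : HasDerivAt (fun y => y * (1 - y)) (1 - 2 * r) r := by
    have := (hasDerivAt_id r).mul ((hasDerivAt_id r).const_sub 1)
    exact this.congr_deriv (by simp only [id_eq, one_mul, mul_neg, mul_one]; ring)
  refine ((hpoly.mul hK).mul hKc).congr_deriv ?_
  have : 1 - r ≠ 0 := by linarith
  simp only [Pi.mul_apply]
  field_simp
  ring

lemma kProduct_monotoneOn : MonotoneOn kProduct (Ioc 0 (1 / 2)) := by
  have hderiv : ∀ r ∈ Ioc (0 : ℝ) (1 / 2), HasDerivAt kProduct _ r := fun r hr =>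
    hasDerivAt_kProduct hr.1 (by linarith [hr.2])
  refine monotoneOn_of_hasDerivWithinAt_nonneg (convex_Ioc 0 (1 / 2))
    (fun r hr => (hderiv r hr).continuousAt.continuousWithinAt)
    (fun r hr => (hderiv r (interior_subset hr)).hasDerivWithinAt) fun r hr => ?_
  rw [interior_Ioc] at hr
  obtain ⟨h0, h1⟩ := hr
  have hK : kSq r ≤ kSq (1 - r) :=
    kSq_monotoneOn ⟨h0.le, by linarith⟩ ⟨by linarith, by linarith⟩ (by linarith)
  have hE : eSq (1 - r) ≤ eSq r :=
    eSq_antitoneOn ⟨h0.le, by linarith⟩ ⟨by linarith, by linarith⟩ (by linarith)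
  have hKr := one_le_kSq h0.le (by linarith)
  have hKc := one_le_kSq (r := 1 - r) (by linarith) (by linarith)
  have hEc := eSq_pos (r := 1 - r) (by linarith) (by linarith)
  -- `E(r) K(1-r) - E(1-r) K(r) ≥ E(1-r) (K(1-r) - K(r)) ≥ 0`.
  have hcross : 0 ≤ eSq r * kSq (1 - r) - eSq (1 - r) * kSq r := by
    nlinarith [mul_le_mul_of_nonneg_right hE (by linarith : (0 : ℝ) ≤ kSq (1 - r)),
      mul_le_mul_of_nonneg_left hK hEc.le]
  have : 0 ≤ (1 - 2 * r) * kSq r * kSq (1 - r) := by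
    have : 0 ≤ 1 - 2 * r := by linarith
    positivity
  positivity

lemma kProduct_antitoneOn : AntitoneOn kProduct (Ico (1 / 2) 1) := by
  intro r hr s hs hrs
  rw [← kProduct_one_sub r, ← kProduct_one_sub s]
  exact kProduct_monotoneOn ⟨by linarith [hs.2], by linarith [hs.1]⟩
    ⟨by linarith [hr.2], by linarith [hr.1]⟩ (by linarith)

lemma kProduct_le_half (h0 : 0 < r) (h1 : r < 1) : kProduct r ≤ kProduct (1 / 2) := by
  rcases le_total r (1 / 2) with h | h
  · exact kProduct_monotoneOn ⟨h0, h⟩ ⟨by norm_num, le_rfl⟩ h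
  · exact kProduct_antitoneOn ⟨le_rfl, by norm_num⟩ ⟨h, h1⟩ h

end KProduct

lemma hyperF_half_half_one (t : ℝ) : hyperF (1 / 2) (1 / 2) 1 t = kSq t := by
  refine tsum_congr fun n => ?_
  rw [ascFac_one, kCoeff, div_pow, sq, sq]

lemma ellipticK_eq_kSq (x : ℝ) : ellipticK x = π / 2 * kSq (x ^ 2) := by
  rw [ellipticK, hyperF_half_half_one]

lemma ellipticK_mul_ellipticK_sqrt_one_sub {x : ℝ} (hx : x ^ 2 ≤ 1) :
    x ^ 2 * (1 - x ^ 2) * ellipticK x * ellipticK (√(1 - x ^ 2)) =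
      (π / 2) ^ 2 * kProduct (x ^ 2) := by
  rw [ellipticK_eq_kSq, ellipticK_eq_kSq, Real.sq_sqrt (by linarith), kProduct]
  ring

/-- `f(x) = x²(1−x²)K(x)K(√(1−x²))` is increasing on `(0,1/√2]` and
decreasing on `[1/√2,1)`, and its maximum on `(0,1)` is `(1/4)K(1/√2)²`. -/
theorem stmt16 :
    MonotoneOn
        (fun x => x ^ 2 * (1 - x ^ 2) * ellipticK x * ellipticK (Real.sqrt (1 - x ^ 2)))
        (Set.Ioc 0 (1 / Real.sqrt 2)) ∧
      AntitoneOn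
        (fun x => x ^ 2 * (1 - x ^ 2) * ellipticK x * ellipticK (Real.sqrt (1 - x ^ 2)))
        (Set.Ico (1 / Real.sqrt 2) 1) ∧
      (∀ x ∈ Set.Ioo (0:ℝ) 1,
        x ^ 2 * (1 - x ^ 2) * ellipticK x * ellipticK (Real.sqrt (1 - x ^ 2)) ≤
          1 / 4 * ellipticK (1 / Real.sqrt 2) ^ 2) ∧
      (1 / Real.sqrt 2) ^ 2 * (1 - (1 / Real.sqrt 2) ^ 2) * ellipticK (1 / Real.sqrt 2) *
          ellipticK (Real.sqrt (1 - (1 / Real.sqrt 2) ^ 2)) =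
        1 / 4 * ellipticK (1 / Real.sqrt 2) ^ 2 := by
  have hc : (1 / √2) ^ 2 = 1 / 2 := by rw [div_pow, one_pow, Real.sq_sqrt zero_le_two]
  have hc0 : 0 < 1 / √2 := by positivity
  have hc1 : 1 / √2 < 1 := by rw [← sq_lt_one_iff₀ hc0.le, hc]; norm_num
  have hsq_le {x : ℝ} (h0 : 0 ≤ x) (h1 : x ≤ 1) : x ^ 2 ≤ 1 := pow_le_one₀ h0 h1
  have hsq_Ioc : MapsTo (· ^ 2) (Ioc 0 (1 / √2)) (Ioc (0 : ℝ) (1 / 2)) := fun x hx =>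
    ⟨pow_pos hx.1 2, hc ▸ pow_le_pow_left₀ hx.1.le hx.2 2⟩
  have hsq_Ico : MapsTo (· ^ 2) (Ico (1 / √2) 1) (Ico (1 / 2 : ℝ) 1) := fun x hx =>
    ⟨hc ▸ pow_le_pow_left₀ hc0.le hx.1 2, pow_lt_one₀ (hc0.le.trans hx.1) hx.2 two_ne_zero⟩
  have hmax : 1 / 4 * ellipticK (1 / √2) ^ 2 = (π / 2) ^ 2 * kProduct (1 / 2) := by
    rw [ellipticK_eq_kSq, hc, kProduct, show (1 : ℝ) - 1 / 2 = 1 / 2 by norm_num]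
    ring
  refine ⟨fun x hx y hy hxy => ?_, fun x hx y hy hxy => ?_, fun x hx => ?_, ?_⟩
  · dsimp only
    rw [ellipticK_mul_ellipticK_sqrt_one_sub (hsq_le hx.1.le (hx.2.trans hc1.le)),
      ellipticK_mul_ellipticK_sqrt_one_sub (hsq_le hy.1.le (hy.2.trans hc1.le))]
    exact mul_le_mul_of_nonneg_left (kProduct_monotoneOn (hsq_Ioc hx) (hsq_Ioc hy)
      (pow_le_pow_left₀ hx.1.le hxy 2)) (sq_nonneg _)
  · dsimp only
    rw [ellipticK_mul_ellipticK_sqrt_one_sub (hsq_le (hc0.le.trans hx.1) hx.2.le),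
      ellipticK_mul_ellipticK_sqrt_one_sub (hsq_le (hc0.le.trans hy.1) hy.2.le)]
    exact mul_le_mul_of_nonneg_left (kProduct_antitoneOn (hsq_Ico hx) (hsq_Ico hy)
      (pow_le_pow_left₀ (hc0.le.trans hx.1) hxy 2)) (sq_nonneg _)
  · rw [ellipticK_mul_ellipticK_sqrt_one_sub (hsq_le hx.1.le hx.2.le), hmax]
    exact mul_le_mul_of_nonneg_left
      (kProduct_le_half (pow_pos hx.1 2) (pow_lt_one₀ hx.1.le hx.2 two_ne_zero)) (sq_nonneg _)
  · rw [ellipticK_mul_ellipticK_sqrt_one_sub (hsq_le hc0.le hc1.le), hc, hmax]
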